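/- Under Assumptions (A5) and (A6), setting γ := max_{t∈T}(m_t − h_t − 1) ∈ (0,1], one has Δ_u(n) = Θ(n^γ): there exist constants 0 < c₁ ≤ c₂ and N ∈ ℕ such that for all n ≥ N, c₁·n^γ ≤ Δ_u(n) ≤ c₂·n^γ. -/

import Mathlib

open MeasureTheory ProbabilityTheory Matrix Filter

/-- The spectral norm of a real square matrix. -/
noncomputable def specNorm {n : ℕ} (A : Matrix (Fin n) (Fin n) ℝ) : ℝ :=
  ‖Matrix.toEuclideanCLM (𝕜 := ℝ) A‖

/-- The `‖·‖_∞` norm of a matrix: maximum absolute row sum. -/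
noncomputable def rowSumNorm {n : ℕ} (A : Matrix (Fin n) (Fin n) ℝ) : ℝ :=
  ⨆ i, ∑ j, |A i j|

/-- The adjacency matrix of the complete graph on the vertices of the ordered list `k.2`. -/
def completeSub {T : Type} {m : T → ℕ} (n : ℕ)
    (k : Σ t : T, Fin (m t) ↪ Fin n) : Matrix (Fin n) (Fin n) ℝ :=
  fun i j => if i ≠ j ∧ (∃ a, k.2 a = i) ∧ (∃ b, k.2 b = j) then 1 else 0


/-!
Write `S = ∑_{(t,L) ∋ i,j} p_n(t,L)` for the expected number of generated subgraphs through an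
edge `ij`. The entry `E[A_u]_{ij}` is the probability that at least one of the independent
indicators `x(t,L)` with `i, j ∈ L` fires, so it lies between `S - S²/2` (second-order
Bonferroni) and `S`. Between `(n/2)^(m_t-2)` and `m_t² n^(m_t-2)` ordered lists of size `m_t`
pass through two given vertices, so (A5) and (A6) give `S ≍ n^(γ-1)`, which tends to `0` because
`γ < 1`. Summing the `n - 1` off-diagonal entries of a row gives `Δ_u ≍ n^γ`.
-/

section Bernoulli

open Finset

variable {Ω ι : Type*} [MeasurableSpace Ω] {μ : Measure Ω}

lemma nonneg_of_eq_zero_or_eq_one {a : ℝ} (h : a = 0 ∨ a = 1) : 0 ≤ a := by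
  rcases h with rfl | rfl <;> norm_num

lemma integral_eq_of_zero_or_one {f : Ω → ℝ} (hf : Measurable f)
    (h01 : ∀ ω, f ω = 0 ∨ f ω = 1) {q : ℝ} (hq : 0 ≤ q)
    (hμ : μ {ω | f ω = 1} = ENNReal.ofReal q) : ∫ ω, f ω ∂μ = q := by
  have hf_eq : f = {ω | f ω = 1}.indicator 1 := by
    funext ω
    rcases h01 ω with h | h <;> simp [h]
  conv_lhs => rw [hf_eq]
  rw [integral_indicator_one (s := {ω | f ω = 1}) (hf (measurableSet_singleton 1)),
    measureReal_def, hμ, ENNReal.toReal_ofReal hq]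

lemma sum_sub_half_sum_offDiag_le_min [DecidableEq ι] {F : Finset ι} {y : ι → ℝ}
    (hy : ∀ k, y k = 0 ∨ y k = 1) :
    ∑ k ∈ F, y k - (∑ k ∈ F, ∑ k' ∈ F.erase k, y k * y k') / 2 ≤ min (∑ k ∈ F, y k) 1 := by
  have hoffDiag :
      ∑ k ∈ F, ∑ k' ∈ F.erase k, y k * y k' = (∑ k ∈ F, y k) ^ 2 - ∑ k ∈ F, y k := by
    rw [sq, sum_mul_sum, eq_sub_iff_add_eq, ← sum_add_distrib]
    refine sum_congr rfl fun k hk => ?_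
    rw [← add_sum_erase _ _ hk]
    rcases hy k with h | h <;> simp [h, add_comm]
  -- the sum counts the indices with `y k = 1`, and `N - N (N - 1) / 2 ≤ min N 1` on `ℕ`
  obtain ⟨N, hN⟩ : ∑ k ∈ F, y k ∈ Set.range (Nat.cast : ℕ → ℝ) :=
    sum_induction _ _ (by rintro _ _ ⟨a, rfl⟩ ⟨b, rfl⟩; exact ⟨a + b, by push_cast; rfl⟩)
      ⟨0, Nat.cast_zero⟩ fun k _ => by rcases hy k with h | h <;> simp [h]
  rw [hoffDiag, ← hN]
  rcases N with _ | _ | N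
  · simp
  · simp
  · push_cast
    rw [min_eq_right (by linarith)]
    nlinarith

variable [IsProbabilityMeasure μ] {x : ι → Ω → ℝ} (F : Finset ι)

lemma integrable_of_zero_or_one {f : Ω → ℝ} (hf : Measurable f)
    (h01 : ∀ ω, f ω = 0 ∨ f ω = 1) : Integrable f μ :=
  .of_mem_Icc 0 1 hf.aemeasurable <| ae_of_all _ fun ω => by rcases h01 ω with h | h <;> simp [h]

lemma integrable_min_sum_one (hmeas : ∀ k, Measurable (x k))
    (h01 : ∀ k ω, x k ω = 0 ∨ x k ω = 1) :
    Integrable (fun ω => min (∑ k ∈ F, x k ω) 1) μ :=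
  .of_mem_Icc 0 1 ((Finset.measurable_sum F fun k _ => hmeas k).min measurable_const).aemeasurable
    (ae_of_all _ fun ω => ⟨le_min (sum_nonneg fun k _ => nonneg_of_eq_zero_or_eq_one (h01 k ω))
      zero_le_one, min_le_right _ _⟩)

lemma integral_min_sum_one_le_sum_integral (hmeas : ∀ k, Measurable (x k))
    (h01 : ∀ k ω, x k ω = 0 ∨ x k ω = 1) :
    ∫ ω, min (∑ k ∈ F, x k ω) 1 ∂μ ≤ ∑ k ∈ F, ∫ ω, x k ω ∂μ := by
  have hint k : Integrable (x k) μ := integrable_of_zero_or_one (hmeas k) (h01 k)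
  rw [← integral_finsetSum F fun k _ => hint k]
  exact integral_mono (integrable_min_sum_one F hmeas h01)
    (integrable_finsetSum F fun k _ => hint k) fun ω => min_le_left _ _

lemma sum_integral_sub_sq_div_two_le_integral_min_sum_one (hmeas : ∀ k, Measurable (x k))
    (h01 : ∀ k ω, x k ω = 0 ∨ x k ω = 1)
    (hindep : Pairwise fun k k' => IndepFun (x k) (x k') μ) :
    ∑ k ∈ F, ∫ ω, x k ω ∂μ - (∑ k ∈ F, ∫ ω, x k ω ∂μ) ^ 2 / 2 ≤
      ∫ ω, min (∑ k ∈ F, x k ω) 1 ∂μ := by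
  classical
  have hint k : Integrable (x k) μ := integrable_of_zero_or_one (hmeas k) (h01 k)
  have hint₂ k k' : Integrable (fun ω => x k ω * x k' ω) μ :=
    integrable_of_zero_or_one ((hmeas k).mul (hmeas k')) fun ω => by
      rcases h01 k ω with h | h <;> rcases h01 k' ω with h' | h' <;> simp [h, h']
  have hsum : Integrable (fun ω => ∑ k ∈ F, x k ω) μ := integrable_finsetSum F fun k _ => hint k
  have hoffDiag : Integrable (fun ω => ∑ k ∈ F, ∑ k' ∈ F.erase k, x k ω * x k' ω) μ :=
    integrable_finsetSum F fun k _ => integrable_finsetSum _ fun k' _ => hint₂ k k'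
  have hoffDiag_eq : ∫ ω, ∑ k ∈ F, ∑ k' ∈ F.erase k, x k ω * x k' ω ∂μ =
      ∑ k ∈ F, ∑ k' ∈ F.erase k, (∫ ω, x k ω ∂μ) * ∫ ω, x k' ω ∂μ := by
    rw [integral_finsetSum F fun k _ => integrable_finsetSum _ fun k' _ => hint₂ k k']
    refine sum_congr rfl fun k _ => ?_
    rw [integral_finsetSum _ fun k' _ => hint₂ k k']
    exact sum_congr rfl fun k' hk' =>
      (hindep (ne_of_mem_erase hk').symm).integral_mul_eq_mul_integral
        (hint k).aestronglyMeasurable (hint k').aestronglyMeasurable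
  have hoffDiag_le : ∑ k ∈ F, ∑ k' ∈ F.erase k, (∫ ω, x k ω ∂μ) * ∫ ω, x k' ω ∂μ ≤
      (∑ k ∈ F, ∫ ω, x k ω ∂μ) ^ 2 := by
    have hnonneg k : 0 ≤ ∫ ω, x k ω ∂μ :=
      integral_nonneg fun ω => nonneg_of_eq_zero_or_eq_one (h01 k ω)
    rw [sq, sum_mul_sum]
    exact sum_le_sum fun k _ => sum_le_sum_of_subset_of_nonneg (erase_subset _ _)
      fun k' _ _ => mul_nonneg (hnonneg k) (hnonneg k')
  calc ∑ k ∈ F, ∫ ω, x k ω ∂μ - (∑ k ∈ F, ∫ ω, x k ω ∂μ) ^ 2 / 2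
      ≤ ∑ k ∈ F, ∫ ω, x k ω ∂μ -
          (∫ ω, ∑ k ∈ F, ∑ k' ∈ F.erase k, x k ω * x k' ω ∂μ) / 2 := by
        rw [hoffDiag_eq]; linarith
    _ = ∫ ω, (∑ k ∈ F, x k ω - (∑ k ∈ F, ∑ k' ∈ F.erase k, x k ω * x k' ω) / 2) ∂μ := by
        rw [integral_sub hsum (hoffDiag.div_const 2), integral_div,
          integral_finsetSum F fun k _ => hint k]
    _ ≤ ∫ ω, min (∑ k ∈ F, x k ω) 1 ∂μ :=
        integral_mono (hsum.sub (hoffDiag.div_const 2)) (integrable_min_sum_one F hmeas h01)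
          fun ω => sum_sub_half_sum_offDiag_le_min fun k => h01 k ω

end Bernoulli

section Counting

open Finset

variable {M n : ℕ}

lemma card_subtype_ne_and_ne {N : ℕ} {a b : Fin N} (hab : a ≠ b) :
    Fintype.card {c : Fin N // c ≠ a ∧ c ≠ b} = N - 2 := by
  rw [Fintype.card_subtype,
    show ({c | c ≠ a ∧ c ≠ b} : Finset (Fin N)) = {a, b}ᶜ by ext; simp, card_compl,
    card_pair hab, Fintype.card_fin]

lemma card_embedding_apply_eq_and_apply_eq_le {i j : Fin n} (hij : i ≠ j) (a b : Fin M) :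
    #{L : Fin M ↪ Fin n | L a = i ∧ L b = j} ≤ n ^ (M - 2) := by
  rcases eq_or_ne a b with rfl | hab
  · rw [filter_eq_empty_iff.mpr fun L _ h => hij (h.1.symm.trans h.2)]
    exact Nat.zero_le _
  -- an embedding with prescribed values at `a` and `b` is determined by the other `M - 2` values
  calc #{L : Fin M ↪ Fin n | L a = i ∧ L b = j}
      ≤ #(univ : Finset ({c : Fin M // c ≠ a ∧ c ≠ b} → Fin n)) := by
        refine card_le_card_of_injOn (fun L c => L c) (fun _ _ => mem_univ _) ?_
        intro L hL L' hL' hLL'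
        simp only [coe_filter, mem_univ, true_and, Set.mem_ofPred_eq] at hL hL'
        ext c
        by_cases hca : c = a
        · rw [hca, hL.1, hL'.1]
        by_cases hcb : c = b
        · rw [hcb, hL.2, hL'.2]
        exact congrArg Fin.val (congrFun hLL' ⟨c, hca, hcb⟩)
    _ = n ^ (M - 2) := by
        rw [card_univ, Fintype.card_fun, card_subtype_ne_and_ne hab, Fintype.card_fin]

lemma card_embedding_covering_le {i j : Fin n} (hij : i ≠ j) :
    #{L : Fin M ↪ Fin n | (∃ a, L a = i) ∧ ∃ b, L b = j} ≤ M ^ 2 * n ^ (M - 2) :=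
  calc #{L : Fin M ↪ Fin n | (∃ a, L a = i) ∧ ∃ b, L b = j}
      ≤ #((univ : Finset (Fin M × Fin M)).biUnion
          fun ab => {L : Fin M ↪ Fin n | L ab.1 = i ∧ L ab.2 = j}) := by
        refine card_le_card fun L => ?_
        simp only [mem_filter, mem_univ, true_and, mem_biUnion, Prod.exists]
        rintro ⟨⟨a, ha⟩, b, hb⟩
        exact ⟨a, b, ha, hb⟩
    _ ≤ ∑ ab : Fin M × Fin M, #{L : Fin M ↪ Fin n | L ab.1 = i ∧ L ab.2 = j} :=
        card_biUnion_le
    _ ≤ ∑ _ab : Fin M × Fin M, n ^ (M - 2) :=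
        sum_le_sum fun ab _ => card_embedding_apply_eq_and_apply_eq_le hij ab.1 ab.2
    _ = M ^ 2 * n ^ (M - 2) := by simp [sq]

lemma descFactorial_le_card_embedding_covering (hM : 2 ≤ M) {i j : Fin n} (hij : i ≠ j) :
    (n - 2).descFactorial (M - 2) ≤
      #{L : Fin M ↪ Fin n | (∃ a, L a = i) ∧ ∃ b, L b = j} := by
  obtain ⟨K, rfl⟩ := Nat.exists_eq_add_of_le' hM
  let extend (e : Fin K ↪ {v : Fin n // v ≠ i ∧ v ≠ j}) : Fin (K + 2) ↪ Fin n :=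
    ⟨Fin.cons i (Fin.cons j fun d => (e d).1), by
      refine Fin.cons_injective_of_injective ?_ (Fin.cons_injective_of_injective ?_ ?_)
      · rintro ⟨c, hc⟩
        cases c using Fin.cases with
        | zero => exact hij hc.symm
        | succ d => exact (e d).2.1 hc
      · rintro ⟨d, hd⟩
        exact (e d).2.2 hd
      · exact fun d d' h => e.injective (Subtype.ext h)⟩
  calc (n - 2).descFactorial (K + 2 - 2)
      = #(univ : Finset (Fin K ↪ {v : Fin n // v ≠ i ∧ v ≠ j})) := by
        rw [card_univ, Fintype.card_embedding_eq, Fintype.card_fin, card_subtype_ne_and_ne hij,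
          Nat.add_sub_cancel]
    _ ≤ #{L : Fin (K + 2) ↪ Fin n | (∃ a, L a = i) ∧ ∃ b, L b = j} := by
        refine card_le_card_of_injOn extend (fun e _ => ?_) fun e _ e' _ h => ?_
        · simp only [coe_filter, mem_univ, true_and, Set.mem_ofPred_eq]
          exact ⟨⟨0, rfl⟩, ⟨1, rfl⟩⟩
        · ext d
          exact congrArg Fin.val (DFunLike.congr_fun h d.succ.succ)

lemma half_pow_le_card_embedding_covering (hM : 2 ≤ M) (hn : 2 * M ≤ n) {i j : Fin n}
    (hij : i ≠ j) :
    ((n : ℝ) / 2) ^ (M - 2) ≤ #{L : Fin M ↪ Fin n | (∃ a, L a = i) ∧ ∃ b, L b = j} := by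
  have hbase : (n : ℝ) / 2 ≤ (n - 2 + 1 - (M - 2) : ℕ) := by
    rw [div_le_iff₀ two_pos]
    exact_mod_cast (by omega : n ≤ (n - 2 + 1 - (M - 2)) * 2)
  calc ((n : ℝ) / 2) ^ (M - 2) ≤ ((n - 2 + 1 - (M - 2) : ℕ) : ℝ) ^ (M - 2) := by gcongr
    _ ≤ _ := by
        exact_mod_cast (Nat.pow_sub_le_descFactorial (n - 2) (M - 2)).trans
          (descFactorial_le_card_embedding_covering hM hij)

end Counting

section Generators

open Finset

variable {T : Type} [Fintype T] {m : T → ℕ} {n : ℕ}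

noncomputable def pairCover (i j : Fin n) : Finset (Σ t : T, Fin (m t) ↪ Fin n) :=
  {k | (∃ a, k.2 a = i) ∧ ∃ b, k.2 b = j}

lemma sum_smul_completeSub_apply_of_ne (c : (Σ t : T, Fin (m t) ↪ Fin n) → ℝ) {i j : Fin n}
    (hij : i ≠ j) : (∑ k, c k • completeSub n k) i j = ∑ k ∈ pairCover i j, c k := by
  simp [Matrix.sum_apply, completeSub, hij, pairCover, sum_filter]

lemma sum_smul_completeSub_apply_self (c : (Σ t : T, Fin (m t) ↪ Fin n) → ℝ) (i : Fin n) :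
    (∑ k, c k • completeSub n k) i i = 0 := by
  simp [Matrix.sum_apply, completeSub]

lemma sum_pairCover_eq (q : (Σ t : T, Fin (m t) ↪ Fin n) → ℝ) (i j : Fin n) :
    ∑ k ∈ pairCover i j, q k =
      ∑ t, ∑ L : Fin (m t) ↪ Fin n with (∃ a, L a = i) ∧ ∃ b, L b = j, q ⟨t, L⟩ := by
  rw [pairCover, sum_filter, ← univ_sigma_univ, sum_sigma]
  simp only [sum_filter]

lemma natCast_pow_sub_two_div_rpow (hn : 0 < n) {M : ℕ} (hM : 2 ≤ M) (e : ℝ) :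
    (n : ℝ) ^ (M - 2) / (n : ℝ) ^ e = (n : ℝ) ^ ((M : ℝ) - e - 1 - 1) := by
  rw [← Real.rpow_natCast, Nat.cast_sub hM, ← Real.rpow_sub (by positivity)]
  ring_nf

variable {h l u : T → ℝ} {p : (Σ t : T, Fin (m t) ↪ Fin n) → ℝ}

lemma sum_pairCover_le (hm : ∀ t, 2 ≤ m t) (hn : 0 < n) (hu : ∀ t, 0 ≤ u t) {γ : ℝ}
    (hγ : ∀ t, (m t : ℝ) - h t - 1 ≤ γ)
    (hA5 : ∀ k, p k = 0 ∨ ∃ b ∈ Set.Icc (l k.1) (u k.1), p k = b / (n : ℝ) ^ h k.1)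
    {i j : Fin n} (hij : i ≠ j) :
    ∑ k ∈ pairCover i j, p k ≤ (∑ t, u t * m t ^ 2) * (n : ℝ) ^ (γ - 1) := by
  have hp k : p k ≤ u k.1 / (n : ℝ) ^ h k.1 := by
    rcases hA5 k with h0 | ⟨b, hb, hbp⟩
    · rw [h0]; exact div_nonneg (hu k.1) (by positivity)
    · rw [hbp]; gcongr; exact hb.2
  have hterm t : (#{L : Fin (m t) ↪ Fin n | (∃ a, L a = i) ∧ ∃ b, L b = j} : ℝ) *
      (u t / (n : ℝ) ^ h t) ≤ u t * m t ^ 2 * (n : ℝ) ^ (γ - 1) :=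
    calc (#{L : Fin (m t) ↪ Fin n | (∃ a, L a = i) ∧ ∃ b, L b = j} : ℝ) *
          (u t / (n : ℝ) ^ h t)
        ≤ (m t ^ 2 * n ^ (m t - 2) : ℕ) * (u t / (n : ℝ) ^ h t) := by
          gcongr
          · exact div_nonneg (hu t) (by positivity)
          · exact card_embedding_covering_le hij
      _ = u t * m t ^ 2 * (n : ℝ) ^ ((m t : ℝ) - h t - 1 - 1) := by
          rw [← natCast_pow_sub_two_div_rpow hn (hm t)]; push_cast; ring
      _ ≤ u t * m t ^ 2 * (n : ℝ) ^ (γ - 1) := by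
          have hn₁ : (1 : ℝ) ≤ n := by exact_mod_cast hn
          exact mul_le_mul_of_nonneg_left
            (Real.rpow_le_rpow_of_exponent_le hn₁ (by linarith [hγ t]))
            (by have := hu t; positivity)
  calc ∑ k ∈ pairCover i j, p k ≤ ∑ k ∈ pairCover i j, u k.1 / (n : ℝ) ^ h k.1 :=
        sum_le_sum fun k _ => hp k
    _ = ∑ t, (#{L : Fin (m t) ↪ Fin n | (∃ a, L a = i) ∧ ∃ b, L b = j} : ℝ) *
          (u t / (n : ℝ) ^ h t) := by
        simp only [sum_pairCover_eq, sum_const, nsmul_eq_mul]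
    _ ≤ ∑ t, u t * m t ^ 2 * (n : ℝ) ^ (γ - 1) := sum_le_sum fun t _ => hterm t
    _ = (∑ t, u t * m t ^ 2) * (n : ℝ) ^ (γ - 1) := (sum_mul ..).symm

lemma le_sum_pairCover (t : T) (hm : 2 ≤ m t) (hn : 2 * m t ≤ n) (hp : ∀ k, 0 ≤ p k)
    (hA5 : ∀ k, p k = 0 ∨ ∃ b ∈ Set.Icc (l k.1) (u k.1), p k = b / (n : ℝ) ^ h k.1)
    (hl : 0 ≤ l t) {ξ : ℝ} (hξ : 0 ≤ ξ) {i j : Fin n} (hij : i ≠ j)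
    (hA6 : ξ * (Nat.card {L : Fin (m t) ↪ Fin n // (∃ a, L a = i) ∧ (∃ b, L b = j)} : ℝ) ≤
      (Nat.card {L : Fin (m t) ↪ Fin n //
        ((∃ a, L a = i) ∧ (∃ b, L b = j)) ∧ 0 < p ⟨t, L⟩} : ℝ)) :
    ξ * l t / 2 ^ (m t - 2) * (n : ℝ) ^ ((m t : ℝ) - h t - 1 - 1) ≤
      ∑ k ∈ pairCover i j, p k := by
  have hn₀ : 0 < n := by omega
  simp only [Nat.card_eq_fintype_card, Fintype.card_subtype] at hA6
  have hlow (L : Fin (m t) ↪ Fin n) (hL : 0 < p ⟨t, L⟩) :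
      l t / (n : ℝ) ^ h t ≤ p ⟨t, L⟩ := by
    rcases hA5 ⟨t, L⟩ with h0 | ⟨b, hb, hbp⟩
    · exact absurd h0 hL.ne'
    · rw [hbp]; gcongr; exact hb.1
  calc ξ * l t / 2 ^ (m t - 2) * (n : ℝ) ^ ((m t : ℝ) - h t - 1 - 1)
      = ξ * ((n : ℝ) / 2) ^ (m t - 2) * (l t / (n : ℝ) ^ h t) := by
        rw [← natCast_pow_sub_two_div_rpow hn₀ hm, div_pow]; ring
    _ ≤ ξ * #{L : Fin (m t) ↪ Fin n | (∃ a, L a = i) ∧ ∃ b, L b = j} *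
          (l t / (n : ℝ) ^ h t) := by
        gcongr
        exact half_pow_le_card_embedding_covering hm hn hij
    _ ≤ #{L : Fin (m t) ↪ Fin n | ((∃ a, L a = i) ∧ ∃ b, L b = j) ∧ 0 < p ⟨t, L⟩} *
          (l t / (n : ℝ) ^ h t) := by
        gcongr
    _ ≤ ∑ L : Fin (m t) ↪ Fin n with ((∃ a, L a = i) ∧ ∃ b, L b = j) ∧ 0 < p ⟨t, L⟩,
          p ⟨t, L⟩ := by
        rw [← nsmul_eq_mul]
        exact card_nsmul_le_sum _ _ _ fun L hL => hlow L (mem_filter.mp hL).2.2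
    _ ≤ ∑ L : Fin (m t) ↪ Fin n with (∃ a, L a = i) ∧ ∃ b, L b = j, p ⟨t, L⟩ := by
        rw [← filter_filter]
        exact sum_le_sum_of_subset_of_nonneg (filter_subset _ _) fun _ _ _ => hp _
    _ ≤ ∑ t', ∑ L : Fin (m t') ↪ Fin n with (∃ a, L a = i) ∧ ∃ b, L b = j, p ⟨t', L⟩ :=
        single_le_sum (f := fun t' =>
            ∑ L : Fin (m t') ↪ Fin n with (∃ a, L a = i) ∧ ∃ b, L b = j, p ⟨t', L⟩)
          (fun t' _ => sum_nonneg fun _ _ => hp _) (mem_univ t)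
    _ = ∑ k ∈ pairCover i j, p k := (sum_pairCover_eq p i j).symm

end Generators

section RowSumNorm

open Finset

variable {n : ℕ} {A : Matrix (Fin n) (Fin n) ℝ}

lemma le_rowSumNorm_of_le_offDiag (hn : 0 < n) {a : ℝ}
    (hA : ∀ i j, i ≠ j → a ≤ A i j) : ((n : ℝ) - 1) * a ≤ rowSumNorm A := by
  let i₀ : Fin n := ⟨0, hn⟩
  calc ((n : ℝ) - 1) * a = #(univ.erase i₀) • a := by
        rw [card_erase_of_mem (mem_univ _), card_univ, Fintype.card_fin, nsmul_eq_mul,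
          Nat.cast_pred hn]
    _ ≤ ∑ j ∈ univ.erase i₀, |A i₀ j| :=
        card_nsmul_le_sum _ _ _ fun j hj =>
          (hA i₀ j (ne_of_mem_erase hj).symm).trans (le_abs_self _)
    _ ≤ ∑ j, |A i₀ j| :=
        sum_le_sum_of_subset_of_nonneg (erase_subset _ _) fun _ _ _ => abs_nonneg _
    _ ≤ rowSumNorm A := le_ciSup (f := fun i => ∑ j, |A i j|) (Set.finite_range _).bddAbove i₀

lemma rowSumNorm_le_of_offDiag_le (hn : 0 < n) (hdiag : ∀ i, A i i = 0) {b : ℝ}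
    (hA : ∀ i j, i ≠ j → |A i j| ≤ b) : rowSumNorm A ≤ ((n : ℝ) - 1) * b := by
  have : Nonempty (Fin n) := ⟨⟨0, hn⟩⟩
  refine ciSup_le fun i => ?_
  calc ∑ j, |A i j| = ∑ j ∈ univ.erase i, |A i j| := by
        rw [sum_erase _ (by rw [hdiag, abs_zero])]
    _ ≤ #(univ.erase i) • b :=
        sum_le_card_nsmul _ _ _ fun j hj => hA i j (ne_of_mem_erase hj).symm
    _ = ((n : ℝ) - 1) * b := by
        rw [card_erase_of_mem (mem_univ _), card_univ, Fintype.card_fin, nsmul_eq_mul,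
          Nat.cast_pred hn]

end RowSumNorm

lemma eventually_const_mul_rpow_le_one {e : ℝ} (he : e < 0) (C : ℝ) :
    ∀ᶠ n : ℕ in atTop, C * (n : ℝ) ^ e ≤ 1 := by
  have hlim : Tendsto (fun n : ℕ => C * (n : ℝ) ^ e) atTop (nhds 0) := by
    simpa using ((tendsto_rpow_neg_atTop (neg_pos.mpr he)).comp
      tendsto_natCast_atTop_atTop).const_mul C
  exact (hlim.eventually_lt_const one_pos).mono fun n hn => hn.le

lemma exists_rowSumNorm_rpow_bounds {A : (n : ℕ) → Matrix (Fin n) (Fin n) ℝ}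
    {S : (n : ℕ) → Fin n → Fin n → ℝ} {γ C D : ℝ} (N₀ : ℕ) (hγ : γ < 1) (hD : 0 < D)
    (hdiag : ∀ n i, A n i i = 0)
    (hA : ∀ n i j, i ≠ j → S n i j - S n i j ^ 2 / 2 ≤ A n i j ∧ A n i j ≤ S n i j)
    (hS : ∀ n, N₀ ≤ n → ∀ i j, i ≠ j →
      D * (n : ℝ) ^ (γ - 1) ≤ S n i j ∧ S n i j ≤ C * (n : ℝ) ^ (γ - 1)) :
    ∃ (c₁ c₂ : ℝ) (N : ℕ), 0 < c₁ ∧ c₁ ≤ c₂ ∧ ∀ n : ℕ, N ≤ n →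
      c₁ * (n : ℝ) ^ γ ≤ rowSumNorm (A n) ∧ rowSumNorm (A n) ≤ c₂ * (n : ℝ) ^ γ := by
  obtain ⟨N₁, hN₁⟩ := eventually_atTop.mp
    (eventually_const_mul_rpow_le_one (by linarith : γ - 1 < 0) C)
  refine ⟨D / 4, max C (D / 4), max (max N₀ N₁) 2, by positivity, le_max_right _ _,
    fun n hn => ?_⟩
  simp only [max_le_iff] at hn
  obtain ⟨⟨hn₀, hn₁⟩, hn₂⟩ := hn
  have hnpos : (0 : ℝ) < n := by exact_mod_cast (by omega : 0 < n)
  have hn2 : (2 : ℝ) ≤ n := by exact_mod_cast hn₂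
  have hrpow : (n : ℝ) * (n : ℝ) ^ (γ - 1) = (n : ℝ) ^ γ := by
    rw [mul_comm, ← Real.rpow_add_one hnpos.ne', sub_add_cancel]
  have hs : 0 < (n : ℝ) ^ (γ - 1) := by positivity
  have hentry i j (hij : i ≠ j) :
      D * (n : ℝ) ^ (γ - 1) / 2 ≤ A n i j ∧ A n i j ≤ C * (n : ℝ) ^ (γ - 1) := by
    obtain ⟨hlo, hhi⟩ := hA n i j hij
    obtain ⟨hSlo, hShi⟩ := hS n hn₀ i j hij
    have hS0 : 0 ≤ S n i j := (mul_pos hD hs).le.trans hSlo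
    have hS1 : S n i j ≤ 1 := hShi.trans (hN₁ n hn₁)
    constructor <;> nlinarith [mul_le_mul_of_nonneg_left hS1 hS0]
  have hCs : 0 ≤ C * (n : ℝ) ^ (γ - 1) := by
    obtain ⟨h₁, h₂⟩ := hentry ⟨0, by omega⟩ ⟨1, by omega⟩ (by simp [Fin.ext_iff])
    nlinarith
  constructor
  · calc D / 4 * (n : ℝ) ^ γ = (n / 2) * (D * (n : ℝ) ^ (γ - 1) / 2) := by
          rw [← hrpow]; ring
      _ ≤ (n - 1) * (D * (n : ℝ) ^ (γ - 1) / 2) := by gcongr; linarith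
      _ ≤ rowSumNorm (A n) :=
          le_rowSumNorm_of_le_offDiag (by omega) fun i j hij => (hentry i j hij).1
  · calc rowSumNorm (A n) ≤ (n - 1) * (C * (n : ℝ) ^ (γ - 1)) :=
          rowSumNorm_le_of_offDiag_le (by omega) (hdiag n) fun i j hij => by
            rw [abs_of_nonneg ((by positivity : (0 : ℝ) ≤ D * _ / 2).trans (hentry i j hij).1)]
            exact (hentry i j hij).2
      _ ≤ n * (C * (n : ℝ) ^ (γ - 1)) := by gcongr; linarith
      _ = C * (n : ℝ) ^ γ := by rw [← hrpow]; ring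
      _ ≤ max C (D / 4) * (n : ℝ) ^ γ := by gcongr; exact le_max_left _ _

theorem deltaU_asymptotics_general
    {T : Type} [Fintype T] [Nonempty T]
    (m : T → ℕ) (hm2 : ∀ t, 2 ≤ m t)
    -- the generating probabilities p_n(t,L)
    (p : (n : ℕ) → (Σ t : T, Fin (m t) ↪ Fin n) → ℝ)
    (hp : ∀ n k, p n k ∈ Set.Icc (0 : ℝ) 1)
    -- the probability spaces and the independent Bernoulli families x(t,L)
    {Ω : ℕ → Type} [∀ n, MeasurableSpace (Ω n)]
    (μ : (n : ℕ) → Measure (Ω n)) [∀ n, IsProbabilityMeasure (μ n)]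
    (x : (n : ℕ) → (Σ t : T, Fin (m t) ↪ Fin n) → Ω n → ℝ)
    (hxmeas : ∀ n k, Measurable (x n k))
    (hx01 : ∀ n k ω, x n k ω = 0 ∨ x n k ω = 1)
    (hxp : ∀ n k, μ n {ω | x n k ω = 1} = ENNReal.ofReal (p n k))
    (hindep : ∀ n, iIndepFun (x n) (μ n))
    -- the weighted adjacency matrix, its expectation, and Δ_w
    (Aw : (n : ℕ) → Ω n → Matrix (Fin n) (Fin n) ℝ)
    (hAw : ∀ n ω, Aw n ω = ∑ k, x n k ω • completeSub n k)
    -- the unweighted adjacency matrix, its expectation, and Δ_u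
    (Au : (n : ℕ) → Ω n → Matrix (Fin n) (Fin n) ℝ)
    (hAu : ∀ n ω i j, Au n ω i j = min (Aw n ω i j) 1)
    (EAu : (n : ℕ) → Matrix (Fin n) (Fin n) ℝ)
    (hEAu : ∀ n i j, EAu n i j = ∫ ω, Au n ω i j ∂(μ n))
    (Δu : ℕ → ℝ) (hΔu : ∀ n, Δu n = rowSumNorm (EAu n))
    -- Assumption (A5)
    (h l u : T → ℝ)
    (hl : ∀ t, 0 < l t) (hlu : ∀ t, l t < u t)
    (hh1 : ∀ t, (m t : ℝ) - 2 < h t) (hh2 : ∀ t, h t < (m t : ℝ) - 1)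
    (hA5 : ∀ n k, p n k = 0 ∨
      ∃ b ∈ Set.Icc (l k.1) (u k.1), p n k = b / (n : ℝ) ^ (h k.1))
    -- Assumption (A6)
    (ξ : T → ℝ) (hξ : ∀ t, ξ t ∈ Set.Ioo (0 : ℝ) 1)
    (hA6b : ∀ (n : ℕ) (t : T) (i j : Fin n),
      ξ t * (Nat.card {L : Fin (m t) ↪ Fin n // (∃ a, L a = i) ∧ (∃ b, L b = j)} : ℝ) ≤
        (Nat.card {L : Fin (m t) ↪ Fin n //
          ((∃ a, L a = i) ∧ (∃ b, L b = j)) ∧ 0 < p n ⟨t, L⟩} : ℝ))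
    (γ : ℝ) (hγ : γ = ⨆ t : T, ((m t : ℝ) - h t - 1)) :
    (0 < γ ∧ γ ≤ 1) ∧
    ∃ (c₁ c₂ : ℝ) (N : ℕ), 0 < c₁ ∧ c₁ ≤ c₂ ∧
      ∀ n : ℕ, N ≤ n →
        c₁ * (n : ℝ) ^ γ ≤ Δu n ∧ Δu n ≤ c₂ * (n : ℝ) ^ γ := by
  obtain ⟨t₀, ht₀⟩ : ∃ t₀, (m t₀ : ℝ) - h t₀ - 1 = γ := hγ ▸ exists_eq_ciSup_of_finite
  have hγ_ge t : (m t : ℝ) - h t - 1 ≤ γ :=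
    hγ ▸ le_ciSup (f := fun t => (m t : ℝ) - h t - 1) (Set.finite_range _).bddAbove t
  have hx n k : ∫ ω, x n k ω ∂μ n = p n k :=
    integral_eq_of_zero_or_one (hxmeas n k) (hx01 n k) (hp n k).1 (hxp n k)
  have hAu_apply n ω (i j : Fin n) (hij : i ≠ j) :
      Au n ω i j = min (∑ k ∈ pairCover i j, x n k ω) 1 := by
    rw [hAu, hAw, sum_smul_completeSub_apply_of_ne _ hij]
  refine ⟨⟨by linarith [hh2 t₀], by linarith [hh1 t₀]⟩, ?_⟩
  simp only [hΔu]
  refine exists_rowSumNorm_rpow_bounds (S := fun n i j => ∑ k ∈ pairCover i j, p n k)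
    (C := ∑ t, u t * m t ^ 2) (D := ξ t₀ * l t₀ / 2 ^ (m t₀ - 2)) (2 * m t₀)
    (by linarith [hh1 t₀]) (by have := (hξ t₀).1; have := hl t₀; positivity)
    (fun n i => ?diag) (fun n i j hij => ?entries) fun n hn i j hij => ⟨?lower, ?upper⟩
  case diag => simp [hEAu, hAu, hAw, sum_smul_completeSub_apply_self]
  case entries =>
    simp only [hEAu, hAu_apply n _ i j hij, ← hx]
    exact ⟨sum_integral_sub_sq_div_two_le_integral_min_sum_one _ (hxmeas n) (hx01 n)
        fun k k' hkk' => (hindep n).indepFun hkk',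
      integral_min_sum_one_le_sum_integral _ (hxmeas n) (hx01 n)⟩
  case lower =>
    rw [← ht₀]
    exact le_sum_pairCover t₀ (hm2 t₀) hn (fun k => (hp n k).1) (hA5 n) (hl t₀).le
      (hξ t₀).1.le hij (hA6b n t₀ i j)
  case upper =>
    exact sum_pairCover_le hm2 (by have := hm2 t₀; omega) (fun t => ((hl t).trans (hlu t)).le)
      hγ_ge (hA5 n) hij

/-- Under (A5) and (A6), with `γ = max_t (m_t − h_t − 1) ∈ (0,1]`,
one has `Δ_u(n) = Θ(n^γ)`. -/
theorem deltaU_asymptotics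
    {T : Type} [Fintype T] [DecidableEq T] [Nonempty T]
    (m : T → ℕ) (hm2 : ∀ t, 2 ≤ m t)
    -- the generating probabilities p_n(t,L)
    (p : (n : ℕ) → (Σ t : T, Fin (m t) ↪ Fin n) → ℝ)
    (hp : ∀ n k, p n k ∈ Set.Icc (0 : ℝ) 1)
    -- the probability spaces and the independent Bernoulli families x(t,L)
    {Ω : ℕ → Type} [∀ n, MeasurableSpace (Ω n)]
    (μ : (n : ℕ) → Measure (Ω n)) [∀ n, IsProbabilityMeasure (μ n)]
    (x : (n : ℕ) → (Σ t : T, Fin (m t) ↪ Fin n) → Ω n → ℝ)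
    (hxmeas : ∀ n k, Measurable (x n k))
    (hx01 : ∀ n k ω, x n k ω = 0 ∨ x n k ω = 1)
    (hxp : ∀ n k, μ n {ω | x n k ω = 1} = ENNReal.ofReal (p n k))
    (hindep : ∀ n, iIndepFun (x n) (μ n))
    -- the weighted adjacency matrix, its expectation, and Δ_w
    (Aw : (n : ℕ) → Ω n → Matrix (Fin n) (Fin n) ℝ)
    (hAw : ∀ n ω, Aw n ω = ∑ k, x n k ω • completeSub n k)
    (EAw : (n : ℕ) → Matrix (Fin n) (Fin n) ℝ)
    (hEAw : ∀ n i j, EAw n i j = ∫ ω, Aw n ω i j ∂(μ n))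
    (Δw : ℕ → ℝ) (hΔw : ∀ n, Δw n = rowSumNorm (EAw n))
    -- the unweighted adjacency matrix, its expectation, and Δ_u
    (Au : (n : ℕ) → Ω n → Matrix (Fin n) (Fin n) ℝ)
    (hAu : ∀ n ω i j, Au n ω i j = min (Aw n ω i j) 1)
    (EAu : (n : ℕ) → Matrix (Fin n) (Fin n) ℝ)
    (hEAu : ∀ n i j, EAu n i j = ∫ ω, Au n ω i j ∂(μ n))
    (Δu : ℕ → ℝ) (hΔu : ∀ n, Δu n = rowSumNorm (EAu n))
    -- Assumption (A5)
    (h l u : T → ℝ)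
    (hl : ∀ t, 0 < l t) (hlu : ∀ t, l t < u t)
    (hh1 : ∀ t, (m t : ℝ) - 2 < h t) (hh2 : ∀ t, h t < (m t : ℝ) - 1)
    (hA5 : ∀ n k, p n k = 0 ∨
      ∃ b ∈ Set.Icc (l k.1) (u k.1), p n k = b / (n : ℝ) ^ (h k.1))
    -- Assumption (A6)
    (ξ : T → ℝ) (hξ : ∀ t, ξ t ∈ Set.Ioo (0 : ℝ) 1)
    (hA6a : ∀ (n : ℕ) (t : T),
      ξ t * (Nat.card (Fin (m t) ↪ Fin n) : ℝ) ≤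
        (Nat.card {L : Fin (m t) ↪ Fin n // 0 < p n ⟨t, L⟩} : ℝ))
    (hA6b : ∀ (n : ℕ) (t : T) (i j : Fin n),
      ξ t * (Nat.card {L : Fin (m t) ↪ Fin n // (∃ a, L a = i) ∧ (∃ b, L b = j)} : ℝ) ≤
        (Nat.card {L : Fin (m t) ↪ Fin n //
          ((∃ a, L a = i) ∧ (∃ b, L b = j)) ∧ 0 < p n ⟨t, L⟩} : ℝ))
    (γ : ℝ) (hγ : γ = ⨆ t : T, ((m t : ℝ) - h t - 1)) :
    (0 < γ ∧ γ ≤ 1) ∧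
    ∃ (c₁ c₂ : ℝ) (N : ℕ), 0 < c₁ ∧ c₁ ≤ c₂ ∧
      ∀ n : ℕ, N ≤ n →
        c₁ * (n : ℝ) ^ γ ≤ Δu n ∧ Δu n ≤ c₂ * (n : ℝ) ^ γ :=
  deltaU_asymptotics_general m hm2 p hp μ x hxmeas hx01 hxp hindep Aw hAw Au hAu EAu hEAu Δu hΔu h l
    u hl hlu hh1 hh2 hA5 ξ hξ hA6b γ hγ
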